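/- arXiv:1101.5738 — 2 statements merged into one kernel-verified Lean document; each statement's English description precedes it below -/
import Mathlib

section
/- Let K and L be finitely generated groups, let L act on K^m by permuting coordinates via a homomorphism π: L → Sym(Fin m) with transitive image, and let G = K^m ⋊ L. Then the minimal number of generators of the abelianization of G is at most d(K) + d(L), where d(-) denotes the minimal number of generators. -/
/-! `G = K^m ⋊ L` is itself generated by `d(K) + d(L)` elements: generators of `L` together with
generators of `K` placed in one coordinate. Conjugation by `L` moves that coordinate to every other
one by transitivity, the coordinate copies of `K` generate `K^m`, and the abelianization is a
quotient of `G`. -/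

/-- The action of `Equiv.Perm (Fin m)` on `K^m` permuting the coordinates:
`σ · (y_1, …, y_m)` has `i`-th coordinate `y_{σ⁻¹ i}`. -/
def permMulAut (K : Type*) [Group K] (m : ℕ) : Equiv.Perm (Fin m) →* MulAut (Fin m → K) where
  toFun σ :=
    { toFun := fun y i => y (σ⁻¹ i)
      invFun := fun y i => y (σ i)
      left_inv := fun y => funext fun i => by simp
      right_inv := fun y => funext fun i => by simp
      map_mul' := fun y z => rfl }
  map_one' := by ext y i; simp
  map_mul' := fun σ τ => by ext y i; simp

open SemidirectProduct Subgroup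

theorem Group.rank_le_card_add_card {G α β : Type*} [Group G] [Group.FG G] {A : Finset α}
    {B : Finset β} (f : α → G) (g : β → G) (h : closure (f '' A ∪ g '' B) = ⊤) :
    Group.rank G ≤ A.card + B.card := by
  classical
  calc Group.rank G ≤ (A.image f ∪ B.image g).card := Group.rank_le (by simpa using h)
    _ ≤ A.card + B.card :=
      (Finset.card_union_le _ _).trans (add_le_add Finset.card_image_le Finset.card_image_le)

namespace SemidirectProduct

variable {N H : Type*} [Group N] [Group H] {φ : H →* MulAut N}

theorem closure_image_inl_union_image_inr_eq_top {A : Set N} {B : Set H}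
    (hA : closure (⋃ h, φ h '' A) = ⊤) (hB : closure B = ⊤) :
    closure (inl '' A ∪ inr '' B : Set (N ⋊[φ] H)) = ⊤ := by
  set T := closure (inl '' A ∪ inr '' B : Set (N ⋊[φ] H))
  have hinr : (inr : H →* N ⋊[φ] H).range ≤ T := by
    rw [MonoidHom.range_eq_map, ← hB, MonoidHom.map_closure]
    exact closure_mono Set.subset_union_right
  have hinl : (inl : N →* N ⋊[φ] H).range ≤ T := by
    rw [MonoidHom.range_eq_map, ← hA, MonoidHom.map_closure, closure_le]
    rintro _ ⟨_, ⟨_, ⟨h, rfl⟩, a, ha, rfl⟩, rfl⟩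
    rw [inl_aut]
    exact mul_mem (mul_mem (hinr ⟨h, rfl⟩) (subset_closure (.inl ⟨a, ha, rfl⟩))) (hinr ⟨h⁻¹, rfl⟩)
  refine eq_top_iff.2 fun x _ => ?_
  rw [← inl_left_mul_inr_right x]
  exact mul_mem (hinl ⟨x.left, rfl⟩) (hinr ⟨x.right, rfl⟩)

end SemidirectProduct

theorem Pi.closure_iUnion_image_mulSingle_eq_top {ι : Type*} [Finite ι] [DecidableEq ι]
    {K : ι → Type*} [∀ i, Group (K i)] {S : ∀ i, Set (K i)} (hS : ∀ i, closure (S i) = ⊤) :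
    closure (⋃ i, Pi.mulSingle i '' S i) = ⊤ := by
  rw [eq_top_iff, ← pi_top Set.univ, pi_le_iff]
  intro i
  rw [← hS i, MonoidHom.map_closure]
  exact closure_mono (Set.subset_iUnion_of_subset i subset_rfl)

theorem permMulAut_mulSingle {K : Type*} [Group K] {m : ℕ} (σ : Equiv.Perm (Fin m)) (i : Fin m)
    (k : K) : permMulAut K m σ (Pi.mulSingle i k) = Pi.mulSingle (σ i) k := by
  ext j
  simp [permMulAut, Pi.mulSingle_apply, eq_comm (a := j), Equiv.symm_apply_eq]

theorem closure_iUnion_permMulAut_image_mulSingle_eq_top {K L : Type*} [Group K] [Group L]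
    {m : ℕ} {π : L →* Equiv.Perm (Fin m)} {i₀ : Fin m} (htrans : ∀ j, ∃ x, π x i₀ = j)
    {S : Set K} (hS : closure S = ⊤) :
    closure (⋃ x, permMulAut K m (π x) '' (Pi.mulSingle i₀ '' S)) = ⊤ := by
  refine eq_top_iff.2 <|
    (Pi.closure_iUnion_image_mulSingle_eq_top fun _ => hS).ge.trans (closure_mono ?_)
  refine Set.iUnion_subset fun j => ?_
  obtain ⟨x, rfl⟩ := htrans j
  refine Set.subset_iUnion_of_subset x ?_
  rintro _ ⟨k, hk, rfl⟩
  exact ⟨_, ⟨k, hk, rfl⟩, permMulAut_mulSingle _ _ _⟩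

/-- If `K`, `L` are finitely generated groups and `L` acts on `K^m` by permuting
coordinates via `π : L → Sym(Fin m)` with transitive image, then the minimal number of
generators of the abelianization of `G = K^m ⋊ L` is at most `d(K) + d(L)`. -/
theorem rank_abelianization_semidirectProduct_le (K L : Type*) [Group K] [Group L]
    [Group.FG K] [Group.FG L] (m : ℕ) (hm : 0 < m) (π : L →* Equiv.Perm (Fin m))
    (htrans : ∀ i j : Fin m, ∃ x : L, π x i = j) :
    ∃ h : Group.FG (Abelianization ((Fin m → K) ⋊[(permMulAut K m).comp π] L)),
      @Group.rank _ _ h ≤ Group.rank K + Group.rank L := by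
  obtain ⟨SK, hSK, hK⟩ := Group.rank_spec K
  obtain ⟨SL, hSL, hL⟩ := Group.rank_spec L
  set G := (Fin m → K) ⋊[(permMulAut K m).comp π] L
  have hgen : closure ((fun k => inl (Pi.mulSingle ⟨0, hm⟩ k)) '' SK ∪ inr '' SL : Set G) = ⊤ := by
    rw [← Set.image_image]
    exact closure_image_inl_union_image_inr_eq_top
      (closure_iUnion_permMulAut_image_mulSingle_eq_top (htrans _) hK) hL
  have hG : Group.FG G :=
    Group.fg_iff.2 ⟨_, hgen, (SK.finite_toSet.image _).union (SL.finite_toSet.image _)⟩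
  have hab : Function.Surjective (Abelianization.of : G →* _) := QuotientGroup.mk_surjective
  have hGab : Group.FG (Abelianization G) := Group.fg_of_surjective hab
  refine ⟨hGab, ?_⟩
  calc Group.rank (Abelianization G) ≤ Group.rank G := Group.rank_le_of_surjective _ hab
    _ ≤ SK.card + SL.card := Group.rank_le_card_add_card _ _ hgen
    _ = Group.rank K + Group.rank L := by rw [hSK, hSL]
end

section
/- Every finite abelian group is isomorphic to a quotient of the absolute Galois group of ℚ by a closed normal subgroup; equivalently, every finite abelian group is realizable as a Galois group over ℚ. -/
/-!
Write `A ≃ ∏ᵢ ℤ/nᵢ` and choose pairwise distinct primes `pᵢ ≡ 1 mod ∏ⱼ nⱼ` (Dirichlet for the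
progression `1 mod N`). Each `(ℤ/pᵢ)ˣ` is cyclic of order `pᵢ - 1`, a multiple of `nᵢ`, so it
surjects onto `ℤ/nᵢ`; by the Chinese remainder theorem `(ℤ/m)ˣ ≃ ∏ᵢ (ℤ/pᵢ)ˣ` with `m = ∏ᵢ pᵢ`
therefore surjects onto `A`. Since `Gal(ℚ(ζₘ)/ℚ) ≃ (ℤ/m)ˣ`, the fixed field of the kernel of the
resulting surjection `Gal(ℚ(ζₘ)/ℚ) → A` is Galois over `ℚ` with group `A`.
-/

open Function

theorem IsCyclic.exists_surjective_zmod {G : Type*} [Group G] [IsCyclic G] {n : ℕ}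
    (hn : n ∣ Nat.card G) : ∃ f : G →* Multiplicative (ZMod n), Surjective f :=
  ⟨(ZMod.castHom hn (ZMod n)).toAddMonoidHom.toMultiplicative.comp
      (zmodCyclicMulEquiv inferInstance).symm.toMonoidHom,
    (ZMod.castHom_surjective hn).comp (zmodCyclicMulEquiv inferInstance).symm.surjective⟩

theorem ZMod.exists_units_surjective_zmod_of_modEq_one {p n : ℕ} [Fact p.Prime]
    (h : p ≡ 1 [MOD n]) : ∃ f : (ZMod p)ˣ →* Multiplicative (ZMod n), Surjective f := by
  apply IsCyclic.exists_surjective_zmod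
  rw [Nat.card_eq_fintype_card, ZMod.card_units]
  exact (Nat.modEq_iff_dvd' (Fact.out : p.Prime).one_le).mp h.symm

theorem Nat.exists_injective_prime_modEq_one (ι : Type*) [Finite ι] {n : ℕ} (hn : n ≠ 0) :
    ∃ p : ι → ℕ, Injective p ∧ ∀ i, (p i).Prime ∧ p i ≡ 1 [MOD n] := by
  let S := {p | p.Prime ∧ p ≡ 1 [MOD n]}
  have : Infinite S := (Nat.infinite_setOfPred_prime_modEq_one hn).to_subtype
  obtain ⟨e, he⟩ := Countable.exists_injective_nat ι
  exact ⟨fun i => Infinite.natEmbedding S (e i),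
    Subtype.val_injective.comp ((Infinite.natEmbedding S).injective.comp he),
    fun i => (Infinite.natEmbedding S (e i)).2⟩

noncomputable def ZMod.unitsProdEquivPi {ι : Type*} [Fintype ι] (p : ι → ℕ)
    (hp : Pairwise (onFun Nat.Coprime p)) : (ZMod (∏ i, p i))ˣ ≃* ∀ i, (ZMod (p i))ˣ :=
  (Units.mapEquiv (ZMod.prodEquivPi p hp).toMulEquiv).trans MulEquiv.piUnits

theorem CommGroup.exists_units_zmod_surjective (A : Type*) [CommGroup A] [Finite A] :
    ∃ m : ℕ, m ≠ 0 ∧ ∃ f : (ZMod m)ˣ →* A, Surjective f := by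
  obtain ⟨ι, _, n, hn, ⟨e⟩⟩ := CommGroup.equiv_prod_multiplicative_zmod_of_finite A
  have hN : ∏ i, n i ≠ 0 :=
    Finset.prod_ne_zero_iff.mpr fun i _ => (zero_lt_one.trans (hn i)).ne'
  obtain ⟨p, hp_inj, hp⟩ := Nat.exists_injective_prime_modEq_one ι hN
  have hcop : Pairwise (onFun Nat.Coprime p) := fun i j hij =>
    (Nat.coprime_primes (hp i).1 (hp j).1).mpr (hp_inj.ne hij)
  have hq : ∀ i, ∃ q : (ZMod (p i))ˣ →* Multiplicative (ZMod (n i)), Surjective q := fun i =>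
    have : Fact (p i).Prime := ⟨(hp i).1⟩
    ZMod.exists_units_surjective_zmod_of_modEq_one
      ((hp i).2.of_dvd (Finset.dvd_prod_of_mem n (Finset.mem_univ i)))
  choose q hq using hq
  let crt := ZMod.unitsProdEquivPi p hcop
  exact ⟨∏ i, p i, Finset.prod_ne_zero_iff.mpr fun i _ => (hp i).1.ne_zero,
    e.symm.toMonoidHom.comp ((MonoidHom.piMap q).comp crt.toMonoidHom),
    e.symm.surjective.comp ((Surjective.piMap hq).comp crt.surjective)⟩

theorem IsGalois.exists_autEquiv_of_surjective {F K A : Type*} [Field F] [Field K]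
    [Algebra F K] [IsGalois F K] [FiniteDimensional F K] [Group A]
    (f : (K ≃ₐ[F] K) →* A) (hf : Surjective f) :
    ∃ L : IntermediateField F K, IsGalois F L ∧ Nonempty ((L ≃ₐ[F] L) ≃* A) :=
  ⟨.fixedField f.ker, IsGalois.of_fixedField_normal_subgroup f.ker,
    ⟨(IsGalois.normalAutEquivQuotient f.ker).symm.trans
      (QuotientGroup.quotientKerEquivOfSurjective f hf)⟩⟩

/-- Every finite abelian group is realizable as a Galois group over `ℚ`
(a consequence of the Kronecker–Weber theorem). -/
theorem finite_abelian_is_galois_group_over_rat (A : Type) [CommGroup A] [Finite A] :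
    ∃ (L : Type) (_ : Field L) (_ : Algebra ℚ L),
      IsGalois ℚ L ∧ Nonempty ((L ≃ₐ[ℚ] L) ≃* A) := by
  obtain ⟨m, hm, f, hf⟩ := CommGroup.exists_units_zmod_surjective A
  have : NeZero m := ⟨hm⟩
  have : NeZero (m : ℚ) := ⟨Nat.cast_ne_zero.mpr hm⟩
  let K := CyclotomicField m ℚ
  have : IsCyclotomicExtension {m} ℚ K := CyclotomicField.isCyclotomicExtension m ℚ
  have : IsGalois ℚ K := IsCyclotomicExtension.isGalois {m} ℚ K
  have : FiniteDimensional ℚ K := IsCyclotomicExtension.finiteDimensional {m} ℚ K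
  let galEquiv : (K ≃ₐ[ℚ] K) ≃* (ZMod m)ˣ := IsCyclotomicExtension.autEquivPow K
    (Polynomial.cyclotomic.irreducible_rat (Nat.pos_of_ne_zero hm))
  obtain ⟨L, hL, ⟨e⟩⟩ := IsGalois.exists_autEquiv_of_surjective
    (f.comp galEquiv.toMonoidHom) (hf.comp galEquiv.surjective)
  exact ⟨L, inferInstance, inferInstance, hL, ⟨e⟩⟩
end
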